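/- For all integers n ≥ 2, k ≥ 1, and m ≥ 0 with m(n−1) ≥ k, there exist a finite set S, a normalized monotone submodular function f : 2^S → ℝ, action sets S_1, …, S_n ⊆ S, and an augmented greedy profile (x_i, z_i)_{i=1}^n for (f, (S_i), k, m) such that f(x_1 ∪ … ∪ x_n) = kn and OPT(f,(S_i),k) = 2k(n−1) + k, so that the achieved ratio is n/(2n−1). -/

import Mathlib

open Finset

variable {α : Type*}

/-- `f` is monotone on finsets. -/
def IsMonotoneFn (f : Finset α → ℝ) : Prop := ∀ A B : Finset α, A ⊆ B → f A ≤ f B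

/-- `f` is submodular. -/
def IsSubmodularFn [DecidableEq α] (f : Finset α → ℝ) : Prop :=
  ∀ A B : Finset α, A ⊆ B → ∀ s ∉ B, f (insert s A) - f A ≥ f (insert s B) - f B

/-- Marginal contribution Δ(A|B) = f(A ∪ B) − f(B). -/
def marg [DecidableEq α] (f : Finset α → ℝ) (A B : Finset α) : ℝ := f (A ∪ B) - f B

/-- Δ^l(A|B): best marginal of a subset of `A` of size at most `l`. -/
noncomputable def margSup [DecidableEq α] (f : Finset α → ℝ) (l : ℕ) (A B : Finset α) : ℝ :=
  (A.powerset.filter (fun C => C.card ≤ l)).sup' ⟨∅, by simp⟩ (fun C => marg f C B)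

/-- Union of the first `i` sets: x_0 ∪ ⋯ ∪ x_{i-1}. -/
def pref [DecidableEq α] (x : ℕ → Finset α) (i : ℕ) : Finset α := (Finset.range i).biUnion x

/-- A nominal greedy profile. -/
def NomGreedy [DecidableEq α] (f : Finset α → ℝ) (Ss : ℕ → Finset α) (k n : ℕ)
    (x : ℕ → Finset α) : Prop :=
  ∀ i < n, x i ⊆ Ss i ∧ (x i).card ≤ k ∧
    ∀ c : Finset α, c ⊆ Ss i → c.card ≤ k → f (c ∪ pref x i) ≤ f (x i ∪ pref x i)

/-- An augmented greedy profile. -/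
def AugGreedy [DecidableEq α] (f : Finset α → ℝ) (Ss : ℕ → Finset α) (k m n : ℕ)
    (x z : ℕ → Finset α) : Prop :=
  ∀ i < n,
    (x i ⊆ Ss i ∪ pref z i ∧ (x i).card ≤ k ∧
      ∀ c : Finset α, c ⊆ Ss i ∪ pref z i → c.card ≤ k →
        f (c ∪ pref x i) ≤ f (x i ∪ pref x i)) ∧
    ∃ zk zr : Finset α,
      z i = zk ∪ zr ∧ zk ⊆ Ss i ∧ zk.card ≤ min k m ∧
      (∀ w : Finset α, w ⊆ Ss i → w.card ≤ min k m →
        marg f w (pref x (i + 1)) ≤ marg f zk (pref x (i + 1))) ∧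
      zr ⊆ Ss i ∧ zr.card ≤ m - k

/-- The optimal value OPT(f, (S_i), k) over feasible profiles with n agents. -/
noncomputable def OPTval [DecidableEq α] [Fintype α] (f : Finset α → ℝ) (Ss : ℕ → Finset α)
    (n k : ℕ) : ℝ :=
  ((Finset.univ : Finset (Fin n → Finset α)).filter
      (fun y => ∀ i : Fin n, y i ⊆ Ss (i : ℕ) ∧ (y i).card ≤ k)).sup'
    ⟨(fun _ => ∅), by simp⟩ (fun y => f (Finset.univ.biUnion (fun i => y i)))


/-!
The function is a coverage function, hence normalized, monotone and submodular. The ground set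
consists of `2n` blocks of `k` elements; agent `i` may use its greedy block `i` and its shadow
block `n + i`, and for `i ≥ 1` the shadow block also covers greedy block `i - 1`. When agent `i`
moves, greedy has already covered block `i - 1`, so both blocks have marginal value `k` and
greedy may take block `i`: it ends with value `nk`. The optimum takes all shadow blocks and covers
`(2n - 1)k` points. The augmentation sets are pieces of shadow blocks, which only ever add points
already covered by greedy, so they do not help later agents.
-/
section Coverage

variable {β : Type*} [DecidableEq β] (cov : α → Finset β)

def coverage (S : Finset α) : ℝ := #(S.biUnion cov)

theorem coverage_empty : coverage cov ∅ = 0 := by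
  simp [coverage]

theorem coverage_monotone : IsMonotoneFn (coverage cov) := fun _ _ h => by
  unfold coverage
  exact_mod_cast card_le_card (biUnion_subset_biUnion_of_subset_left _ h)

theorem coverage_insert [DecidableEq α] (s : α) (C : Finset α) :
    coverage cov (insert s C) = coverage cov C + #(cov s \ C.biUnion cov) := by
  rw [coverage, coverage, biUnion_insert, ← card_sdiff_add_card]
  push_cast
  ring

theorem coverage_submodular [DecidableEq α] : IsSubmodularFn (coverage cov) := by
  intro A B hAB s _
  have h : #(cov s \ B.biUnion cov) ≤ #(cov s \ A.biUnion cov) :=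
    card_le_card (sdiff_subset_sdiff subset_rfl (biUnion_subset_biUnion_of_subset_left _ hAB))
  rw [coverage_insert, coverage_insert]
  have := (Nat.cast_le (α := ℝ)).2 h
  linarith

theorem card_le_coverage {g : α → β} (hg : Function.Injective g) (S : Finset α)
    (h : ∀ e ∈ S, g e ∈ cov e) : (#S : ℝ) ≤ coverage cov S := by
  have hsub : S.image g ⊆ S.biUnion cov := by
    simpa only [image_subset_iff, mem_biUnion] using fun e he => ⟨e, he, h e he⟩
  have := card_le_card hsub
  rw [card_image_of_injective _ hg] at this
  unfold coverage
  exact_mod_cast this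

theorem coverage_le_mul_card (b : ℕ) (S : Finset α) (h : ∀ e ∈ S, #(cov e) ≤ b) :
    coverage cov S ≤ b * #S := by
  have := card_biUnion_le_card_mul S cov b h
  rw [coverage, mul_comm]
  exact_mod_cast this

theorem coverage_biUnion_le {ι : Type*} [DecidableEq α] (s : Finset ι) (y : ι → Finset α) :
    coverage cov (s.biUnion y) ≤ ∑ i ∈ s, coverage cov (y i) := by
  unfold coverage
  rw [biUnion_biUnion]
  exact_mod_cast card_biUnion_le

theorem coverage_union_le [DecidableEq α] (g : α → β) (c P : Finset α)
    (h : ∀ e ∈ c, cov e ⊆ insert (g e) (P.biUnion cov)) :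
    coverage cov (c ∪ P) ≤ coverage cov P + #c := by
  have hsub : (c ∪ P).biUnion cov ⊆ c.image g ∪ P.biUnion cov := by
    rw [union_biUnion]
    refine union_subset (biUnion_subset.2 fun e he => (h e he).trans ?_) subset_union_right
    exact insert_subset (mem_union_left _ (mem_image_of_mem g he)) subset_union_right
  have := (card_le_card hsub).trans
    ((card_union_le _ _).trans (Nat.add_le_add_right card_image_le _))
  unfold coverage
  rw [add_comm]
  exact_mod_cast this

end Coverage

theorem pref_succ [DecidableEq α] (x : ℕ → Finset α) (i : ℕ) :
    pref x (i + 1) = x i ∪ pref x i := by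
  rw [pref, range_add_one, biUnion_insert, pref]

theorem exists_lt_mem_Ico_mul {u j k : ℕ} :
    (∃ i < j, i * k ≤ u ∧ u < i * k + k) ↔ u < j * k := by
  constructor
  · rintro ⟨i, hij, -, hu⟩
    nlinarith
  · intro hu
    have hk : 0 < k := Nat.pos_of_ne_zero (by rintro rfl; simp at hu)
    exact ⟨u / k, (Nat.div_lt_iff_lt_mul hk).2 hu, Nat.div_mul_le_self u k,
      Nat.lt_div_mul_add hk⟩

def toFin (N : ℕ) (s : Finset ℕ) : Finset (Fin N) := univ.filter fun e => (e : ℕ) ∈ s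

@[simp] theorem mem_toFin {N : ℕ} {s : Finset ℕ} {e : Fin N} :
    e ∈ toFin N s ↔ (e : ℕ) ∈ s := by
  simp [toFin]

theorem card_toFin_le (N : ℕ) (s : Finset ℕ) : #(toFin N s) ≤ #s := by
  rw [← card_image_of_injective _ Fin.val_injective]
  exact card_le_card fun u hu => by obtain ⟨e, he, rfl⟩ := mem_image.1 hu; simpa using he

theorem card_toFin {N : ℕ} {s : Finset ℕ} (h : ∀ u ∈ s, u < N) : #(toFin N s) = #s := by
  rw [show toFin N s = s.attachFin h by ext; simp, card_attachFin]

namespace HardInstance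

/-- Block `j` is `[j k, j k + k)`; an element of a shadow block `n + i` with `i ≥ 1` also covers
the element at the same position in greedy block `i - 1`. -/
def cov (n k e : ℕ) : Finset ℕ := if (n + 1) * k ≤ e then {e - (n + 1) * k, e} else {e}

variable (n k m : ℕ)

def f : Finset (Fin (2 * n * k)) → ℝ := coverage fun e => cov n k e

def block (j : ℕ) : Finset (Fin (2 * n * k)) := toFin _ (Ico (j * k) (j * k + k))

def actions (i : ℕ) : Finset (Fin (2 * n * k)) := block n k i ∪ block n k (n + i)

def augment (i : ℕ) : Finset (Fin (2 * n * k)) :=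
  toFin _ (Ico ((n + i) * k) ((n + i) * k + min k m))

variable {n k m}

theorem self_mem_cov (e : ℕ) : e ∈ cov n k e := by
  unfold cov; split_ifs <;> simp

theorem card_cov_le_two (e : ℕ) : #(cov n k e) ≤ 2 := by
  unfold cov; split_ifs
  · exact card_insert_le _ _
  · simp

theorem card_le_f (S : Finset (Fin (2 * n * k))) : (#S : ℝ) ≤ f n k S :=
  card_le_coverage _ Fin.val_injective S fun e _ => self_mem_cov e

theorem f_eq_card {S : Finset (Fin (2 * n * k))} (h : ∀ e ∈ S, (e : ℕ) < (n + 1) * k) :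
    f n k S = #S := by
  refine le_antisymm ?_ (card_le_f S)
  show coverage _ S ≤ _
  simpa using coverage_le_mul_card _ 1 S fun e he => by simp [cov, (h e he).not_ge]

theorem card_block {j : ℕ} (hj : j < 2 * n) : #(block n k j) = k := by
  rw [block, card_toFin fun u hu => by rw [mem_Ico] at hu; nlinarith, Nat.card_Ico]
  omega

theorem pref_block (j : ℕ) : pref (block n k) j = toFin _ (Ico 0 (j * k)) := by
  ext e
  simp only [pref, block, mem_biUnion, mem_range, mem_toFin, mem_Ico, Nat.zero_le, true_and]
  exact exists_lt_mem_Ico_mul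

theorem f_pref_block {j : ℕ} (hj : j ≤ n) :
    f n k (pref (block n k) j) = ((j * k : ℕ) : ℝ) := by
  have hjk : j * k ≤ n * k := Nat.mul_le_mul_right k hj
  rw [pref_block, f_eq_card fun e he => by simp at he; nlinarith,
    card_toFin fun u hu => by simp at hu; nlinarith, Nat.card_Ico, Nat.sub_zero]

theorem cov_subset_insert_pref {j : ℕ} (hj : j ≤ n) {e : Fin (2 * n * k)}
    (he : (e : ℕ) < (n + 1) * k + j * k) :
    cov n k e ⊆ insert (e : ℕ) ((pref (block n k) j).biUnion fun e => cov n k e) := by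
  rw [cov]
  split_ifs with hs
  · refine insert_subset (mem_insert_of_mem (mem_biUnion.2 ?_))
      (singleton_subset_iff.2 (mem_insert_self _ _))
    have hjk : j * k ≤ n * k := Nat.mul_le_mul_right k hj
    refine ⟨⟨e - (n + 1) * k, by omega⟩, ?_, self_mem_cov _⟩
    simp only [pref_block, mem_toFin, mem_Ico]
    omega
  · exact singleton_subset_iff.2 (mem_insert_self _ _)

theorem f_union_pref_le {j : ℕ} (hj : j ≤ n) {c : Finset (Fin (2 * n * k))}
    (hc : ∀ e ∈ c, (e : ℕ) < (n + 1) * k + j * k) :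
    f n k (c ∪ pref (block n k) j) ≤ j * k + #c := by
  have := coverage_union_le (fun e : Fin (2 * n * k) => cov n k e) Fin.val c _
    fun e he => cov_subset_insert_pref hj (hc e he)
  rwa [← f, f_pref_block hj, Nat.cast_mul] at this

theorem val_lt_of_mem_actions {i : ℕ} {e : Fin (2 * n * k)} (he : e ∈ actions n k i) :
    (e : ℕ) < (n + 1) * k + i * k := by
  simp only [actions, block, mem_union, mem_toFin, mem_Ico, add_mul, one_mul] at he ⊢
  have : i * k ≤ n * k + i * k := Nat.le_add_left _ _
  omega

theorem augment_subset_actions (i : ℕ) : augment n k m i ⊆ actions n k i := by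
  intro e he
  simp only [augment, actions, block, mem_union, mem_toFin, mem_Ico] at he ⊢
  omega

theorem val_lt_of_mem_actions_union_pref {i : ℕ} {e : Fin (2 * n * k)}
    (he : e ∈ actions n k i ∪ pref (augment n k m) i) : (e : ℕ) < (n + 1) * k + i * k := by
  rcases mem_union.1 he with he | he
  · exact val_lt_of_mem_actions he
  · obtain ⟨j, hj, hej⟩ := mem_biUnion.1 he
    have := val_lt_of_mem_actions (augment_subset_actions j hej)
    have := Nat.mul_le_mul_right k (mem_range.1 hj).le
    omega

theorem f_augment_union_pref_ge {i : ℕ} (hi : i < n) :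
    (((i + 1) * k + min k m : ℕ) : ℝ) ≤
      f n k (augment n k m i ∪ pref (block n k) (i + 1)) := by
  have hik : i * k + k ≤ n * k := by simpa [add_mul] using Nat.mul_le_mul_right k hi
  have hN : 2 * n * k = n * k + n * k := by ring
  have hmin := min_le_left k m
  have hdisj : Disjoint (augment n k m i) (pref (block n k) (i + 1)) := by
    rw [disjoint_left]
    intro e he he'
    simp only [augment, pref_block, mem_toFin, mem_Ico, add_mul, one_mul] at he he'
    omega
  have hcard : #(augment n k m i ∪ pref (block n k) (i + 1)) = (i + 1) * k + min k m := by
    rw [card_union_of_disjoint hdisj, augment, pref_block, card_toFin, card_toFin, Nat.card_Ico,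
      Nat.card_Ico]
    · simp only [add_mul, one_mul]
      omega
    all_goals intro u hu; simp only [mem_Ico, add_mul, one_mul] at hu; omega
  rw [← hcard]
  exact card_le_f _

theorem augGreedy_block : AugGreedy (f n k) (actions n k) k m n (block n k) (augment n k m) := by
  intro i hi
  refine ⟨⟨subset_union_left.trans subset_union_left, (card_block (by omega)).le, ?_⟩,
    augment n k m i, ∅, (union_empty _).symm, augment_subset_actions i, ?_, ?_, empty_subset _,
    by simp⟩
  · intro c hc hck
    have h := f_union_pref_le hi.le fun e he => val_lt_of_mem_actions_union_pref (hc he)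
    rw [← pref_succ, f_pref_block hi]
    have : (#c : ℝ) ≤ k := by exact_mod_cast hck
    push_cast
    linarith
  · exact (card_toFin_le _ _).trans (by simp)
  · intro w hw hwc
    have hik : i * k ≤ (i + 1) * k := Nat.mul_le_mul_right k (Nat.le_succ i)
    have hw := f_union_pref_le hi fun e he => (val_lt_of_mem_actions (hw he)).trans_le
      (Nat.add_le_add_left hik _)
    have hz := f_augment_union_pref_ge (k := k) (m := m) hi
    have : (#w : ℝ) ≤ (min k m : ℕ) := by exact_mod_cast hwc
    unfold marg
    push_cast at *
    linarith

theorem mem_biUnion_block_shift {e : Fin (2 * n * k)} (he : n * k ≤ e) :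
    e ∈ univ.biUnion fun i : Fin n => block n k (n + i) := by
  have hN : 2 * n * k = n * k + n * k := by ring
  obtain ⟨i, hi, hie⟩ := exists_lt_mem_Ico_mul.2 (show (e : ℕ) - n * k < n * k by omega)
  simp only [mem_biUnion, mem_univ, true_and, block, mem_toFin, mem_Ico, add_mul]
  exact ⟨⟨i, hi⟩, by dsimp only; omega⟩

theorem f_le_of_feasible (hn : 1 ≤ n) (y : Fin n → Finset (Fin (2 * n * k)))
    (hy : ∀ i, y i ⊆ actions n k i ∧ #(y i) ≤ k) :
    f n k (univ.biUnion y) ≤ ((2 * k * (n - 1) + k : ℕ) : ℝ) := by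
  obtain ⟨p, rfl⟩ : ∃ p, n = p + 1 := ⟨n - 1, by omega⟩
  have h0 : f (p + 1) k (y 0) ≤ k := by
    rw [f_eq_card fun e he => by simpa using val_lt_of_mem_actions ((hy 0).1 he)]
    exact_mod_cast (hy 0).2
  have hsucc (i : Fin p) : f (p + 1) k (y i.succ) ≤ 2 * k := by
    refine (coverage_le_mul_card (fun e : Fin _ => cov (p + 1) k e) 2 _
      fun e _ => card_cov_le_two (e : ℕ)).trans ?_
    have : (#(y i.succ) : ℝ) ≤ k := by exact_mod_cast (hy i.succ).2
    push_cast
    linarith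
  calc f (p + 1) k (univ.biUnion y) ≤ ∑ i, f (p + 1) k (y i) := coverage_biUnion_le _ _ _
    _ = f (p + 1) k (y 0) + ∑ i : Fin p, f (p + 1) k (y i.succ) := Fin.sum_univ_succ _
    _ ≤ k + ∑ _i : Fin p, (2 * k : ℝ) := add_le_add h0 (sum_le_sum fun i _ => hsucc i)
    _ = ((2 * k * (p + 1 - 1) + k : ℕ) : ℝ) := by simp; ring

theorem le_f_biUnion_block_shift (hn : 1 ≤ n) :
    ((2 * k * (n - 1) + k : ℕ) : ℝ) ≤
      f n k (univ.biUnion fun i : Fin n => block n k (n + i)) := by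
  obtain ⟨p, rfl⟩ : ∃ p, n = p + 1 := ⟨n - 1, by omega⟩
  have hN : 2 * (p + 1) * k = (p + 1) * k + (p + 1) * k := by ring
  have hpk : (p + 1) * k = p * k + k := by ring
  set S := univ.biUnion fun i : Fin (p + 1) => block (p + 1) k (p + 1 + i)
  have hsub : Ico 0 (p * k) ∪ Ico ((p + 1) * k) (2 * (p + 1) * k) ⊆
      S.biUnion fun e => cov (p + 1) k e := by
    intro u hu
    rw [mem_biUnion]
    rcases mem_union.1 hu with hu | hu <;> rw [mem_Ico] at hu
    · refine ⟨⟨u + (p + 1 + 1) * k, by rw [add_mul]; omega⟩,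
        mem_biUnion_block_shift (by simp only [add_mul]; omega), ?_⟩
      simp [cov]
    · exact ⟨⟨u, hu.2⟩, mem_biUnion_block_shift hu.1, self_mem_cov u⟩
  have hcard := card_le_card hsub
  rw [card_union_of_disjoint (disjoint_left.2 fun u hu hu' => by simp at hu hu'; omega),
    Nat.card_Ico, Nat.card_Ico] at hcard
  have hcount : 2 * k * (p + 1 - 1) + k ≤ #(S.biUnion fun e => cov (p + 1) k e) := by
    rw [Nat.add_sub_cancel, show 2 * k * p = p * k + p * k by ring]
    omega
  unfold f coverage
  exact_mod_cast hcount

theorem OPTval_eq (hn : 1 ≤ n) :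
    OPTval (f n k) (actions n k) n k = ((2 * k * (n - 1) + k : ℕ) : ℝ) := by
  refine le_antisymm (sup'_le _ _ fun y hy => f_le_of_feasible hn y (mem_filter.1 hy).2) ?_
  refine (le_f_biUnion_block_shift hn).trans (le_sup' (f := fun y : Fin n → _ =>
    f n k (univ.biUnion fun i => y i)) (b := fun i => block n k (n + i)) ?_)
  exact mem_filter.2 ⟨mem_univ _, fun i => ⟨subset_union_right, (card_block (by omega)).le⟩⟩

end HardInstance

theorem stmt15_general (n k m : ℕ) (hn : 2 ≤ n) (hk : 1 ≤ k) :
    ∃ (N : ℕ) (f : Finset (Fin N) → ℝ) (Ss x z : ℕ → Finset (Fin N)),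
      f ∅ = 0 ∧ IsMonotoneFn f ∧ IsSubmodularFn f ∧
      AugGreedy f Ss k m n x z ∧
      f ((Finset.range n).biUnion x) = ((k * n : ℕ) : ℝ) ∧
      OPTval f Ss n k = ((2 * k * (n - 1) + k : ℕ) : ℝ) ∧
      f ((Finset.range n).biUnion x) / OPTval f Ss n k = (n : ℝ) / (2 * (n : ℝ) - 1) := by
  open HardInstance in
  have hgreedy : f n k ((range n).biUnion (block n k)) = ((k * n : ℕ) : ℝ) := by
    rw [← pref, f_pref_block le_rfl, mul_comm]
  have hopt := HardInstance.OPTval_eq (k := k) (by omega : 1 ≤ n)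
  refine ⟨2 * n * k, HardInstance.f n k, HardInstance.actions n k, HardInstance.block n k,
    HardInstance.augment n k m, coverage_empty _, coverage_monotone _, coverage_submodular _,
    HardInstance.augGreedy_block, hgreedy, hopt, ?_⟩
  obtain ⟨p, rfl⟩ : ∃ p, n = p + 1 := ⟨n - 1, by omega⟩
  have hden : (2 * ((p + 1 : ℕ) : ℝ) - 1) ≠ 0 := by
    push_cast
    linarith [(p.cast_nonneg : (0 : ℝ) ≤ p)]
  rw [hgreedy, hopt, Nat.add_sub_cancel, div_eq_div_iff (by positivity) hden]
  push_cast
  ring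

/-- Hard instance for the case m(n−1) ≥ k (Figure 2b in the paper). -/
theorem stmt15 (n k m : ℕ) (hn : 2 ≤ n) (hk : 1 ≤ k) (hmk : k ≤ m * (n - 1)) :
    ∃ (N : ℕ) (f : Finset (Fin N) → ℝ) (Ss x z : ℕ → Finset (Fin N)),
      f ∅ = 0 ∧ IsMonotoneFn f ∧ IsSubmodularFn f ∧
      AugGreedy f Ss k m n x z ∧
      f ((Finset.range n).biUnion x) = ((k * n : ℕ) : ℝ) ∧
      OPTval f Ss n k = ((2 * k * (n - 1) + k : ℕ) : ℝ) ∧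
      f ((Finset.range n).biUnion x) / OPTval f Ss n k = (n : ℝ) / (2 * (n : ℝ) - 1) :=
  stmt15_general n k m hn hk
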